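/- (Theorem 1, exact form) Let n ≥ 2, let δ ∈ (0,1), and define Δ = 4n² + 8nδ(n − 1) and q₁ = (2n(1+δ) − √Δ)/(2(2n + δn²)). Sample M points i.i.d. uniformly from Fin n. If (1 − 1/n)^M ≤ q₁, then the probability that at least one cell of Fin n is uncovered by the M samples is at most δ/2. -/

import Mathlib

/-!
By the union bound, the probability that some cell is missed is at most `n (1 - 1/n)^M`, since a
fixed cell is missed by all `M` samples with probability `(1 - 1/n)^M`. So it suffices that
`q₁ ≤ δ / (2n)`: rationalizing the numerator gives `q₁ = 2δ / (2n(1 + δ) + √Δ)`, and `√Δ ≥ 2n`.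
-/

open MeasureTheory Fintype

namespace PMF

variable {ι α : Type*} [Fintype ι] [DecidableEq ι] [Fintype α] [Nonempty α] [MeasurableSpace α]
  [MeasurableSingletonClass α]

theorem uniformOfFintype_real_forall_ne (a : α) :
    (uniformOfFintype (ι → α)).toMeasure.real {ω | ∀ i, ω i ≠ a}
      = (1 - 1 / card α) ^ card ι := by
  classical
  have hset : {ω : ι → α | ∀ i, ω i ≠ a} = ↑(piFinset fun _ : ι => Finset.univ.erase a) := by
    ext ω; simp
  rw [measureReal_def, hset, toMeasure_uniformOfFintype_apply _ (Set.toFinite _).measurableSet]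
  simp only [Finset.coe_sort_coe, card_coe, card_piFinset, Finset.card_erase_of_mem
    (Finset.mem_univ a), card_pi, Finset.prod_const, Finset.card_univ, ENNReal.toReal_div,
    ENNReal.toReal_natCast]
  rw [Nat.cast_pow, Nat.cast_pow, Nat.cast_sub card_pos, ← div_pow, sub_div,
    div_self (by positivity)]
  simp

theorem uniformOfFintype_real_exists_forall_ne_le :
    (uniformOfFintype (ι → α)).toMeasure.real {ω | ∃ a, ∀ i, ω i ≠ a}
      ≤ card α * (1 - 1 / card α) ^ card ι := by
  rw [Set.ofPred_exists]
  calc _ ≤ ∑ a : α, (uniformOfFintype (ι → α)).toMeasure.real {ω | ∀ i, ω i ≠ a} :=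
        measureReal_iUnion_fintype_le _
    _ = card α * (1 - 1 / card α) ^ card ι := by
        simp [uniformOfFintype_real_forall_ne]

end PMF

/-- The smaller root `q₁` of `q² (2n + δn²) - 2nq (1 + δ) + δ = 0`. -/
noncomputable def coverageRoot (n δ : ℝ) : ℝ :=
  (2 * n * (1 + δ) - √(4 * n ^ 2 + 8 * n * δ * (n - 1))) / (2 * (2 * n + δ * n ^ 2))

theorem coverageRoot_le_div {n δ : ℝ} (hn : 1 ≤ n) (hδ : 0 ≤ δ) :
    coverageRoot n δ ≤ δ / (2 * n) := by
  set s := √(4 * n ^ 2 + 8 * n * δ * (n - 1))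
  have hnδ : 0 ≤ n * δ * (n - 1) := mul_nonneg (by positivity) (sub_nonneg.mpr hn)
  have hs_sq : s ^ 2 = 4 * n ^ 2 + 8 * n * δ * (n - 1) := Real.sq_sqrt (by positivity)
  have hs_lower : 2 * n ≤ s := Real.le_sqrt_of_sq_le (by linarith)
  have hs_upper : s ≤ 2 * n * (1 + δ) :=
    Real.sqrt_le_iff.mpr ⟨by positivity, by nlinarith [mul_nonneg (by positivity : 0 ≤ n) hδ]⟩
  unfold coverageRoot
  rw [div_le_div_iff₀ (by positivity) (by positivity)]
  nlinarith [mul_le_mul_of_nonneg_left (sub_nonneg.mpr hs_upper) (sub_nonneg.mpr hs_lower)]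

/-- Theorem 1, exact form: For n ≥ 2, δ ∈ (0,1), with
Δ = 4n² + 8nδ(n-1) and q₁ = (2n(1+δ) - √Δ)/(2(2n+δn²)), if `(1 - 1/n)^M ≤ q₁`
then the probability (under M i.i.d. uniform samples on `Fin n`) that at least one
cell is uncovered is at most δ/2. -/
theorem sample_complexity_exact (n M : ℕ) (hn : 2 ≤ n) (δ : ℝ) (hδ : δ ∈ Set.Ioo (0 : ℝ) 1)
    (hM : (1 - 1 / (n : ℝ)) ^ M ≤
      (2 * (n : ℝ) * (1 + δ) - Real.sqrt (4 * (n : ℝ) ^ 2 + 8 * (n : ℝ) * δ * ((n : ℝ) - 1)))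
        / (2 * (2 * (n : ℝ) + δ * (n : ℝ) ^ 2))) :
    ((@PMF.uniformOfFintype (Fin M → Fin n) _ ⟨fun _ => ⟨0, by omega⟩⟩).toMeasure
        {ω | ∃ i : Fin n, ∀ j, ω j ≠ i}).toReal ≤ δ / 2 := by
  have : NeZero n := ⟨by omega⟩
  have hn1 : (1 : ℝ) ≤ n := by exact_mod_cast (by omega : 1 ≤ n)
  have hq : (1 - 1 / (n : ℝ)) ^ M ≤ δ / (2 * n) :=
    hM.trans (coverageRoot_le_div hn1 hδ.1.le)
  rw [← measureReal_def]
  calc _ ≤ (n : ℝ) * (1 - 1 / (n : ℝ)) ^ M := by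
        simpa only [card_fin] using
          PMF.uniformOfFintype_real_exists_forall_ne_le (ι := Fin M) (α := Fin n)
    _ ≤ n * (δ / (2 * n)) := by gcongr
    _ = δ / 2 := by field_simp
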